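/- arXiv:2508.18759 — 2 statements merged into one kernel-verified Lean document; each statement's English description precedes it below -/
import Mathlib

section
/- Fix natural numbers k < n, a k-dimensional linear subspace V of ℝⁿ, and d ≤ n − k. Let p ∈ ℝⁿ and let Δ be a linear (d−1)-simplex in ℝⁿ ∖ {p} whose affine span contains the origin and which is transverse to 𝔉(V). Let π_Δ denote the orthogonal projection of ℝⁿ onto Gr(Δ)⊥. Then the join p⋆Δ is a non-degenerate linear d-simplex transverse to 𝔉(V) if and only if π_Δ(p) ∉ π_Δ(V). -/
noncomputable section

open Metric Set

/-- Two linear subspaces of ℝⁿ are transverse if the dimension of their span is maximal. -/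
def Transv {n : ℕ} (V W : Submodule ℝ (EuclideanSpace ℝ (Fin n))) : Prop :=
  Module.finrank ℝ ↥(V ⊔ W) = min (Module.finrank ℝ ↥V + Module.finrank ℝ ↥W) n

/-- The space of directions of the affine span of a family of points (Gr(Δ)). -/
def simplexDir {n m : ℕ} (v : Fin m → EuclideanSpace ℝ (Fin n)) :
    Submodule ℝ (EuclideanSpace ℝ (Fin n)) :=
  (affineSpan ℝ (Set.range v)).direction

/-- Orthogonal projection of ℝⁿ onto the orthogonal complement of V, as a map ℝⁿ → ℝⁿ. -/
def projPerp {n : ℕ} (V : Submodule ℝ (EuclideanSpace ℝ (Fin n)))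
    (x : EuclideanSpace ℝ (Fin n)) : EuclideanSpace ℝ (Fin n) :=
  (Submodule.orthogonalProjection Vᗮ x : EuclideanSpace ℝ (Fin n))

/-- Orthogonal projection onto V as a continuous linear endomorphism of ℝⁿ. -/
def projCL {n : ℕ} (V : Submodule ℝ (EuclideanSpace ℝ (Fin n))) :
    EuclideanSpace ℝ (Fin n) →L[ℝ] EuclideanSpace ℝ (Fin n) :=
  V.subtypeL.comp (Submodule.orthogonalProjection V)

/-- Operator-norm distance between orthogonal projections. -/
def dProj {n : ℕ} (V W : Submodule ℝ (EuclideanSpace ℝ (Fin n))) : ℝ :=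
  ‖projCL V - projCL W‖

/-- `p⋆Δ` is `δ`-semitransverse to `𝔉(V)` in `p`. -/
def SemiT {n m : ℕ} (δ : ℝ) (p : EuclideanSpace ℝ (Fin n))
    (v : Fin m → EuclideanSpace ℝ (Fin n))
    (V : Submodule ℝ (EuclideanSpace ℝ (Fin n))) : Prop :=
  ∀ p' : EuclideanSpace ℝ (Fin n), dist p' p < δ →
    AffineIndependent ℝ (Fin.cons p' v : Fin (m+1) → EuclideanSpace ℝ (Fin n)) ∧
    Transv (simplexDir (Fin.cons p' v : Fin (m+1) → EuclideanSpace ℝ (Fin n))) V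

/-- Maximal distance between two vertices of a simplex. -/
def rMax {n m : ℕ} (v : Fin m → EuclideanSpace ℝ (Fin n)) : ℝ :=
  ⨆ i, ⨆ j, dist (v i) (v j)

/-- Minimal distance between a vertex and the affine span of the opposite face. -/
def rMin {n m : ℕ} (v : Fin m → EuclideanSpace ℝ (Fin n)) : ℝ :=
  ⨅ i, Metric.infDist (v i) (affineSpan ℝ (v '' {i}ᶜ) : Set (EuclideanSpace ℝ (Fin n)))

/-- The degeneracy quantity Λ(Δ). -/
def Lam {n m : ℕ} (v : Fin (m+1) → EuclideanSpace ℝ (Fin n)) : ℝ :=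
  sSup {t : ℝ | ∃ lam : Fin m → ℝ,
    ‖∑ i, lam i • (v i.succ - v 0)‖ = 1 ∧ ∃ i, t = |lam i|}

/-- ε-transversality of a simplex with vertices `v` to the constant foliation `𝔉(V)`. -/
def EpsT {n m : ℕ} (ε : ℝ) (v : Fin (m+1) → EuclideanSpace ℝ (Fin n))
    (V : Submodule ℝ (EuclideanSpace ℝ (Fin n))) : Prop :=
  ∀ D : Submodule ℝ (EuclideanSpace ℝ (Fin n)),
    Module.finrank ℝ ↥D = m → dProj (simplexDir v) D < ε → Transv D V

/-- δ-semitransversality of a simplex in its `i`-th vertex. -/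
def STat {n m : ℕ} (δ : ℝ) (w : Fin m → EuclideanSpace ℝ (Fin n)) (i : Fin m)
    (V : Submodule ℝ (EuclideanSpace ℝ (Fin n))) : Prop :=
  ∀ p' : EuclideanSpace ℝ (Fin n), dist p' (w i) < δ →
    AffineIndependent ℝ (Function.update w i p') ∧
    Transv (simplexDir (Function.update w i p')) V

/-- The coordinate subspace ℝᵏ × {0} of ℝⁿ. -/
def stdFol (n k : ℕ) : Submodule ℝ (EuclideanSpace ℝ (Fin n)) where
  carrier := {x | ∀ i : Fin n, k ≤ (i : ℕ) → x i = 0}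
  zero_mem' := fun i _ => rfl
  add_mem' := by
    intro x y hx hy i hi
    show x i + y i = 0
    rw [hx i hi, hy i hi, add_zero]
  smul_mem' := by
    intro c x hx i hi
    show c * x i = 0
    rw [hx i hi, mul_zero]

/-- Graph of a linear map V → V⊥ as a subspace of ℝⁿ. -/
def graphOf {n : ℕ} {V : Submodule ℝ (EuclideanSpace ℝ (Fin n))}
    (T : ↥V →L[ℝ] ↥Vᗮ) : Submodule ℝ (EuclideanSpace ℝ (Fin n)) :=
  LinearMap.range (V.subtype + Vᗮ.subtype.comp T.toLinearMap)

/- Since `0` lies in the affine span of `Δ`, the direction space of `p⋆Δ` is `Gr(Δ) ⊔ ℝ p`, and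
`π_Δ(p) ∈ π_Δ(V)` means exactly `p ∈ Gr(Δ) ⊔ V`. Both sides of the equivalence then become
dimension counts: `p⋆Δ` is a transverse `d`-simplex iff `dim (Gr(Δ) ⊔ V ⊔ ℝ p) = d + k`, one more
than `dim (Gr(Δ) ⊔ V) = (d - 1) + k`, i.e. iff `p ∉ Gr(Δ) ⊔ V`. -/

section Linear

variable {K E : Type*} [DivisionRing K] [AddCommGroup E] [Module K E]

open Submodule in
theorem vectorSpan_eq_span_of_zero_mem_affineSpan {s : Set E} (h0 : (0 : E) ∈ affineSpan K s) :
    vectorSpan K s = span K s := by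
  rw [← vectorSpan_insert_eq_vectorSpan h0, vectorSpan_eq_span_vsub_set_right K (mem_insert 0 s)]
  simp only [vsub_eq_sub, sub_zero, Set.image_id', span_insert_zero]

open Module Submodule

variable [FiniteDimensional K E]

theorem finrank_sup_span_singleton_eq_iff {W : Submodule K E} {p : E} :
    finrank K ↥(W ⊔ K ∙ p) = finrank K W + 1 ↔ p ∉ W := by
  refine ⟨fun h hp => ?_, finrank_sup_span_singleton⟩
  rw [sup_eq_left.2 ((span_singleton_le_iff_mem p W).2 hp)] at h
  omega

theorem finrank_sup_span_singleton_le (W : Submodule K E) (p : E) :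
    finrank K ↥(W ⊔ K ∙ p) ≤ finrank K W + 1 := by
  by_cases hp : p ∈ W
  · rw [sup_eq_left.2 ((span_singleton_le_iff_mem p W).2 hp)]
    omega
  · exact (finrank_sup_span_singleton hp).le

/-- In dimension terms: if `W ⊔ U` is direct, then `W ⊔ K ∙ p ⊔ U` is direct with `p ∉ W` exactly
when `p ∉ W ⊔ U`. -/
theorem notMem_sup_iff_finrank_sup_span_singleton {W U : Submodule K E}
    (hWU : finrank K ↥(W ⊔ U) = finrank K W + finrank K U) (p : E) :
    p ∉ W ⊔ U ↔ finrank K ↥(W ⊔ K ∙ p) = finrank K W + 1 ∧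
      finrank K ↥(W ⊔ K ∙ p ⊔ U) = finrank K ↥(W ⊔ K ∙ p) + finrank K U := by
  have hsub := finrank_add_le_finrank_add_finrank (W ⊔ K ∙ p) U
  have hW := finrank_sup_span_singleton_le W p
  have hWU' := finrank_sup_span_singleton_le (W ⊔ U) p
  rw [sup_right_comm] at hsub ⊢
  rw [← finrank_sup_span_singleton_eq_iff]
  omega

end Linear

theorem transv_iff_of_add_le {n : ℕ} {V W : Submodule ℝ (EuclideanSpace ℝ (Fin n))}
    (h : Module.finrank ℝ V + Module.finrank ℝ W ≤ n) :
    Transv V W ↔ Module.finrank ℝ ↥(V ⊔ W) = Module.finrank ℝ V + Module.finrank ℝ W := by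
  rw [Transv, min_eq_left h]

theorem projPerp_eq_projPerp_iff {n : ℕ} (W : Submodule ℝ (EuclideanSpace ℝ (Fin n)))
    (x y : EuclideanSpace ℝ (Fin n)) : projPerp W x = projPerp W y ↔ x - y ∈ W := by
  rw [projPerp, projPerp, Subtype.coe_inj, ← sub_eq_zero, ← map_sub,
    Submodule.orthogonalProjectionOnto_eq_zero_iff, Submodule.orthogonal_orthogonal]

theorem projPerp_mem_image_iff {n : ℕ} (W V : Submodule ℝ (EuclideanSpace ℝ (Fin n)))
    (p : EuclideanSpace ℝ (Fin n)) :
    projPerp W p ∈ projPerp W '' (V : Set (EuclideanSpace ℝ (Fin n))) ↔ p ∈ W ⊔ V := by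
  simp only [Set.mem_image, SetLike.mem_coe, projPerp_eq_projPerp_iff, Submodule.mem_sup]
  constructor
  · rintro ⟨u, hu, hup⟩
    exact ⟨p - u, sub_mem_comm_iff.1 hup, u, hu, sub_add_cancel p u⟩
  · rintro ⟨w, hw, u, hu, rfl⟩
    exact ⟨u, hu, by simpa using hw⟩

theorem simplexDir_cons {n m : ℕ} (p : EuclideanSpace ℝ (Fin n))
    (v : Fin m → EuclideanSpace ℝ (Fin n))
    (h0 : (0 : EuclideanSpace ℝ (Fin n)) ∈ affineSpan ℝ (Set.range v)) :
    simplexDir (Fin.cons p v : Fin (m + 1) → EuclideanSpace ℝ (Fin n)) =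
      simplexDir v ⊔ ℝ ∙ p := by
  have h0' : (0 : EuclideanSpace ℝ (Fin n)) ∈ affineSpan ℝ (insert p (Set.range v)) :=
    affineSpan_mono ℝ (subset_insert p _) h0
  rw [simplexDir, simplexDir, Fin.range_cons, direction_affineSpan, direction_affineSpan,
    vectorSpan_eq_span_of_zero_mem_affineSpan h0', vectorSpan_eq_span_of_zero_mem_affineSpan h0,
    Submodule.span_insert, sup_comm]

theorem affineIndependent_iff_finrank_simplexDir {n m : ℕ}
    (v : Fin (m + 1) → EuclideanSpace ℝ (Fin n)) :
    AffineIndependent ℝ v ↔ Module.finrank ℝ ↥(simplexDir v) = m := by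
  rw [simplexDir, direction_affineSpan]
  exact affineIndependent_iff_finrank_vectorSpan_eq ℝ v (Fintype.card_fin _)

theorem stmt_2_general (n k d : ℕ) (hd : d ≤ n - k)
    (V : Submodule ℝ (EuclideanSpace ℝ (Fin n))) (hV : Module.finrank ℝ ↥V = k)
    (p : EuclideanSpace ℝ (Fin n)) (v : Fin d → EuclideanSpace ℝ (Fin n))
    (hAI : AffineIndependent ℝ v)
    (h0 : (0 : EuclideanSpace ℝ (Fin n)) ∈ affineSpan ℝ (Set.range v))
    (hT : Transv (simplexDir v) V) :
    (AffineIndependent ℝ (Fin.cons p v : Fin (d+1) → EuclideanSpace ℝ (Fin n)) ∧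
      Transv (simplexDir (Fin.cons p v : Fin (d+1) → EuclideanSpace ℝ (Fin n))) V) ↔
      projPerp (simplexDir v) p ∉
        projPerp (simplexDir v) '' (V : Set (EuclideanSpace ℝ (Fin n))) := by
  obtain ⟨e, rfl⟩ : ∃ e, d = e + 1 := by
    cases d with
    | zero => simp [AffineSubspace.notMem_bot] at h0
    | succ e => exact ⟨e, rfl⟩
  have hW : Module.finrank ℝ ↥(simplexDir v) = e :=
    (affineIndependent_iff_finrank_simplexDir v).1 hAI
  rw [transv_iff_of_add_le (V := simplexDir v) (W := V) (by omega)] at hT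
  rw [projPerp_mem_image_iff, notMem_sup_iff_finrank_sup_span_singleton hT,
    ← simplexDir_cons p v h0, hW, affineIndependent_iff_finrank_simplexDir]
  refine and_congr_right fun h => transv_iff_of_add_le ?_
  omega

theorem stmt_2 (n k d : ℕ) (hk : k < n) (hd : d ≤ n - k)
    (V : Submodule ℝ (EuclideanSpace ℝ (Fin n))) (hV : Module.finrank ℝ ↥V = k)
    (p : EuclideanSpace ℝ (Fin n)) (v : Fin d → EuclideanSpace ℝ (Fin n))
    (hAI : AffineIndependent ℝ v)
    (hp : p ∉ convexHull ℝ (Set.range v))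
    (h0 : (0 : EuclideanSpace ℝ (Fin n)) ∈ affineSpan ℝ (Set.range v))
    (hT : Transv (simplexDir v) V) :
    (AffineIndependent ℝ (Fin.cons p v : Fin (d+1) → EuclideanSpace ℝ (Fin n)) ∧
      Transv (simplexDir (Fin.cons p v : Fin (d+1) → EuclideanSpace ℝ (Fin n))) V) ↔
      projPerp (simplexDir v) p ∉
        projPerp (simplexDir v) '' (V : Set (EuclideanSpace ℝ (Fin n))) :=
  stmt_2_general n k d hd V hV p v hAI h0 hT
end
end

section
/- Fix natural numbers d and k < n, and a k-dimensional linear subspace V of ℝⁿ. Then there exists a constant C > 0 such that for every ζ > 0 and every linear d-simplex Δ in ℝⁿ with vertices v₀, …, v_d the following holds: if every tuple (v₀', …, v_d') with |v_i' − v_i| < ζ for all i consists of affinely independent points spanning a linear d-simplex transverse to 𝔉(V), then Δ is (C ζ / r_max(Δ))-transverse to 𝔉(V). -/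
noncomputable section

open Metric Set

/-!
Take `C = 1`. If a `d`-plane `D` satisfies `dProj (Gr Δ) D < ζ / rMax Δ`, move each vertex `vᵢ` to
`v₀ + P_D (vᵢ - v₀)`. Since `P_{Gr Δ}` fixes `vᵢ - v₀`, the displacement is
`(P_D - P_{Gr Δ}) (vᵢ - v₀)`, of norm `< ζ`. By hypothesis the moved simplex is nondegenerate and
transverse to `V`; its direction lies in `D` and has dimension `d`, so it is `D`.
-/

section

variable {n m : ℕ}

lemma dist_le_rMax (v : Fin m → EuclideanSpace ℝ (Fin n)) (i j : Fin m) :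
    dist (v i) (v j) ≤ rMax v :=
  (le_ciSup (Set.finite_range _).bddAbove j).trans
    (le_ciSup (f := fun i => ⨆ j, dist (v i) (v j)) (Set.finite_range _).bddAbove i)

lemma projCL_apply_of_mem {G : Submodule ℝ (EuclideanSpace ℝ (Fin n))}
    {x : EuclideanSpace ℝ (Fin n)} (hx : x ∈ G) : projCL G x = x :=
  Submodule.starProjection_eq_self_iff.mpr hx

lemma projCL_apply_mem (G : Submodule ℝ (EuclideanSpace ℝ (Fin n)))
    (x : EuclideanSpace ℝ (Fin n)) : projCL G x ∈ G :=
  (G.orthogonalProjectionOnto x).2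

lemma sub_mem_simplexDir (v : Fin m → EuclideanSpace ℝ (Fin n)) (i j : Fin m) :
    v i - v j ∈ simplexDir v :=
  AffineSubspace.vsub_mem_direction (mem_affineSpan ℝ (mem_range_self i))
    (mem_affineSpan ℝ (mem_range_self j))

lemma simplexDir_le_of_forall_sub_mem {v : Fin m → EuclideanSpace ℝ (Fin n)}
    {D : Submodule ℝ (EuclideanSpace ℝ (Fin n))} (p : EuclideanSpace ℝ (Fin n))
    (hv : ∀ i, v i - p ∈ D) : simplexDir v ≤ D := by
  have hspan : affineSpan ℝ (range v) ≤ AffineSubspace.mk' p D :=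
    affineSpan_le.mpr (range_subset_iff.mpr fun i => AffineSubspace.mem_mk'.mpr (hv i))
  simpa only [simplexDir, AffineSubspace.direction_mk'] using AffineSubspace.direction_le hspan

lemma dist_add_projCL_sub_le (v : Fin (m + 1) → EuclideanSpace ℝ (Fin n))
    (D : Submodule ℝ (EuclideanSpace ℝ (Fin n))) (i : Fin (m + 1)) :
    dist (v 0 + projCL D (v i - v 0)) (v i) ≤ dProj (simplexDir v) D * rMax v := by
  have hdisp : v 0 + projCL D (v i - v 0) - v i
      = (projCL D - projCL (simplexDir v)) (v i - v 0) := by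
    rw [sub_apply, projCL_apply_of_mem (sub_mem_simplexDir v i 0)]
    abel
  calc dist (v 0 + projCL D (v i - v 0)) (v i)
      ≤ ‖projCL D - projCL (simplexDir v)‖ * dist (v i) (v 0) := by
        rw [dist_eq_norm, hdisp, dist_eq_norm (v i) (v 0)]
        exact ContinuousLinearMap.le_opNorm _ _
    _ ≤ dProj (simplexDir v) D * rMax v := by
        rw [dProj, norm_sub_rev]
        exact mul_le_mul_of_nonneg_left (dist_le_rMax v i 0) (norm_nonneg _)

lemma simplexDir_eq_of_le {v : Fin (m + 1) → EuclideanSpace ℝ (Fin n)}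
    (hv : AffineIndependent ℝ v) {D : Submodule ℝ (EuclideanSpace ℝ (Fin n))}
    (hD : Module.finrank ℝ D = m) (hle : simplexDir v ≤ D) : simplexDir v = D := by
  rw [simplexDir, direction_affineSpan] at hle ⊢
  exact hv.vectorSpan_eq_of_le_of_card_eq_finrank_add_one hle (by simp [hD])

end

theorem stmt_7_general (n d : ℕ)
    (V : Submodule ℝ (EuclideanSpace ℝ (Fin n))) :
    ∃ C > (0:ℝ), ∀ ζ : ℝ, 0 < ζ →
      ∀ v : Fin (d+1) → EuclideanSpace ℝ (Fin n), AffineIndependent ℝ v →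
        (∀ v' : Fin (d+1) → EuclideanSpace ℝ (Fin n), (∀ i, dist (v' i) (v i) < ζ) →
          AffineIndependent ℝ v' ∧ Transv (simplexDir v') V) →
        EpsT (C * ζ / rMax v) v V := by
  refine ⟨1, one_pos, fun ζ hζ v _ hstable D hD hdist => ?_⟩
  rw [one_mul] at hdist
  have hr : 0 < rMax v := by
    by_contra! hr
    have : ζ / rMax v ≤ 0 := div_nonpos_of_nonneg_of_nonpos hζ.le hr
    exact (norm_nonneg _).not_gt (hdist.trans_le this)
  set w : Fin (d + 1) → EuclideanSpace ℝ (Fin n) := fun i => v 0 + projCL D (v i - v 0)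
  have hclose : ∀ i, dist (w i) (v i) < ζ := fun i =>
    (dist_add_projCL_sub_le v D i).trans_lt ((lt_div_iff₀ hr).mp hdist)
  obtain ⟨hw, hT⟩ := hstable w hclose
  have hwD : simplexDir w ≤ D :=
    simplexDir_le_of_forall_sub_mem (v 0) fun i => by
      simpa only [w, add_sub_cancel_left] using projCL_apply_mem D (v i - v 0)
  rwa [simplexDir_eq_of_le hw hD hwD] at hT

theorem stmt_7 (n d k : ℕ) (hk : k < n)
    (V : Submodule ℝ (EuclideanSpace ℝ (Fin n))) (hV : Module.finrank ℝ ↥V = k) :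
    ∃ C > (0:ℝ), ∀ ζ : ℝ, 0 < ζ →
      ∀ v : Fin (d+1) → EuclideanSpace ℝ (Fin n), AffineIndependent ℝ v →
        (∀ v' : Fin (d+1) → EuclideanSpace ℝ (Fin n), (∀ i, dist (v' i) (v i) < ζ) →
          AffineIndependent ℝ v' ∧ Transv (simplexDir v') V) →
        EpsT (C * ζ / rMax v) v V :=
  stmt_7_general n d V
end
end
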